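/- Let A, B ∈ F₂[[q]] be odd. If a, b ∈ F₂[[q]] satisfy that T_{A,B}^k(a) and T_{A,B}^k(b) have the same parity for every k ∈ ℕ, then a = b. (The parity vector map PV_{A,B} is injective.) -/

import Mathlib

open PowerSeries
open scoped Classical

/-- Shift map on `F₂[[q]]`: equals `x / q` whenever `q ∣ x`. -/
noncomputable def divq (x : PowerSeries (ZMod 2)) : PowerSeries (ZMod 2) :=
  PowerSeries.mk fun n => PowerSeries.coeff (n + 1) x

/-- `T_{A,B}(x) = x/q` if `q ∣ x`, and `(A*x + B)/q` otherwise.  (When `A`, `B`, `x` are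
all odd, `A*x + B` is divisible by `q`, so `divq` computes the true quotient there.) -/
noncomputable def Tab (A B x : PowerSeries (ZMod 2)) : PowerSeries (ZMod 2) :=
  if X ∣ x then divq x else divq (A * x + B)

/-! The difference `d_k = T^k(a) - T^k(b)` satisfies `q · d_{k+1} = c_k · d_k` with `c_k ∈ {1, A}`
a unit, as long as `d_k` is even. If all the `d_k` are even, induction on `n` then gives
`q^n ∣ d_k` for all `k` and `n`, so `d_0 = a - b = 0`. -/

lemma divq_sub (x y : PowerSeries (ZMod 2)) : divq (x - y) = divq x - divq y := by
  ext n
  simp [divq]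

lemma X_mul_divq {x : PowerSeries (ZMod 2)} (hx : X ∣ x) : X * divq x = x := by
  obtain ⟨y, rfl⟩ := hx
  congr 1
  ext n
  simp [divq, coeff_succ_X_mul]

lemma eq_of_forall_X_pow_dvd_sub {R : Type*} [CommRing R] {x y : PowerSeries R}
    (h : ∀ n, (X : PowerSeries R) ^ n ∣ x - y) : x = y := by
  rw [← sub_eq_zero]
  ext n
  simpa using X_pow_dvd_iff.mp (h (n + 1)) n n.lt_succ_self

lemma X_mul_Tab_sub_Tab {A : PowerSeries (ZMod 2)} (hA : constantCoeff A = 1)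
    (B : PowerSeries (ZMod 2)) {u v : PowerSeries (ZMod 2)}
    (huv : constantCoeff u = constantCoeff v) :
    ∃ c : PowerSeries (ZMod 2), IsUnit c ∧ X * (Tab A B u - Tab A B v) = c * (u - v) := by
  have hdvd : X ∣ u - v := X_dvd_iff.mpr (by rw [map_sub, huv, sub_self])
  by_cases hu : X ∣ u
  · have hv : X ∣ v := X_dvd_iff.mpr (huv ▸ X_dvd_iff.mp hu)
    refine ⟨1, isUnit_one, ?_⟩
    rw [Tab, Tab, if_pos hu, if_pos hv, ← divq_sub, X_mul_divq hdvd, one_mul]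
  · have hv : ¬ X ∣ v := fun hv => hu (X_dvd_iff.mpr (huv ▸ X_dvd_iff.mp hv))
    refine ⟨A, isUnit_iff_constantCoeff.mpr (by simp [hA]), ?_⟩
    rw [Tab, Tab, if_neg hu, if_neg hv, ← divq_sub, add_sub_add_right_eq_sub, ← mul_sub,
      X_mul_divq (dvd_mul_of_dvd_right hdvd A)]

theorem Tab_parity_vector_injective_general (A B : PowerSeries (ZMod 2))
    (hA : PowerSeries.constantCoeff A = 1)
    (a b : PowerSeries (ZMod 2))
    (h : ∀ k : ℕ, PowerSeries.constantCoeff ((Tab A B)^[k] a) =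
      PowerSeries.constantCoeff ((Tab A B)^[k] b)) :
    a = b := by
  suffices hpow : ∀ n k, (X : PowerSeries (ZMod 2)) ^ n ∣ (Tab A B)^[k] a - (Tab A B)^[k] b from
    eq_of_forall_X_pow_dvd_sub fun n => hpow n 0
  intro n
  induction n with
  | zero => simp
  | succ n ih =>
    intro k
    obtain ⟨c, hc, hstep⟩ := X_mul_Tab_sub_Tab hA B (h k)
    rw [← hc.dvd_mul_left, ← hstep, pow_succ']
    simpa only [Function.iterate_succ_apply'] using mul_dvd_mul_left X (ih (k + 1))

/-- For odd `A, B`: if the parities of `T_{A,B}^k(a)` and `T_{A,B}^k(b)` agree for every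
`k`, then `a = b` (the parity vector map is injective). -/
theorem Tab_parity_vector_injective (A B : PowerSeries (ZMod 2))
    (hA : PowerSeries.constantCoeff A = 1)
    (hB : PowerSeries.constantCoeff B = 1)
    (a b : PowerSeries (ZMod 2))
    (h : ∀ k : ℕ, PowerSeries.constantCoeff ((Tab A B)^[k] a) =
      PowerSeries.constantCoeff ((Tab A B)^[k] b)) :
    a = b :=
  Tab_parity_vector_injective_general A B hA a b h
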